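/- arXiv:2212.12755 — 2 statements merged into one kernel-verified Lean document; each statement's English description precedes it below -/
import Mathlib

section
/- The two definitions of the Gini index agree: for a probability vector p on {0,…,d−1}, one has 1 − (2/(d+1)) Σ_{k=0}^{d−1} (d−k) p(π(k)) = (1/(2(d+1))) Σ_{r,s} |p(r) − p(s)|, where π is a permutation sorting p in ascending order. -/
open Matrix BigOperators

noncomputable def omega (d : ℕ) : ℂ := Complex.exp (2 * Real.pi * Complex.I / d)

noncomputable def wpow (d : ℕ) [NeZero d] (x : ZMod d) : ℂ := omega d ^ x.val

noncomputable def Fmat (d : ℕ) [NeZero d] : Matrix (ZMod d) (ZMod d) ℂ :=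
  Matrix.of fun r s => wpow d (r * s) / (Real.sqrt d : ℂ)

noncomputable def Zmat (d : ℕ) [NeZero d] : Matrix (ZMod d) (ZMod d) ℂ :=
  Matrix.diagonal fun m => wpow d m

noncomputable def Xmat (d : ℕ) [NeZero d] : Matrix (ZMod d) (ZMod d) ℂ :=
  Matrix.of fun m n => if m = n + 1 then 1 else 0

noncomputable def Dmat (d : ℕ) [NeZero d] (a b : ZMod d) : Matrix (ZMod d) (ZMod d) ℂ :=
  wpow d (-((2 : ZMod d)⁻¹ * a * b)) • (Zmat d ^ a.val * Xmat d ^ b.val)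

noncomputable def gini {n : Type*} [Fintype n] (p : n → ℝ) : ℝ :=
  (1 / (2 * ((Fintype.card n : ℝ) + 1))) * ∑ r, ∑ s, |p r - p s|

noncomputable def outer {n : Type*} [Fintype n] (v : n → ℂ) : Matrix n n ℂ :=
  Matrix.vecMulVec v (star v)

noncomputable def probX (d : ℕ) [NeZero d] (ρ : Matrix (ZMod d) (ZMod d) ℂ) : ZMod d → ℝ :=
  fun r => (ρ r r).re

noncomputable def probP (d : ℕ) [NeZero d] (ρ : Matrix (ZMod d) (ZMod d) ℂ) : ZMod d → ℝ :=
  fun r => (((Fmat d)ᴴ * ρ * Fmat d) r r).re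

noncomputable def giniX (d : ℕ) [NeZero d] (ρ : Matrix (ZMod d) (ZMod d) ℂ) : ℝ :=
  gini (probX d ρ)

noncomputable def giniP (d : ℕ) [NeZero d] (ρ : Matrix (ZMod d) (ZMod d) ℂ) : ℝ :=
  gini (probP d ρ)

noncomputable def giniXP (d : ℕ) [NeZero d] (ρ : Matrix (ZMod d) (ZMod d) ℂ) : ℝ :=
  giniX d ρ + giniP d ρ

/-!
Reindexing by `π` does not change the Gini index, so one may assume `p` sorted. For a sorted
vector `q`, `|q k - q l|` is `q k - q l` on the lower triangle `l ≤ k` and its negative above, so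
the double sum of absolute differences is twice the lower-triangular sum of `q k - q l`. In that
sum `q k` occurs with weight `k + 1` in row `k` and with weight `-(d - k)` in column `k`.
-/

open Finset

theorem Fin.sum_sum_Iic_eq_sum_nsmul {M : Type*} [AddCommMonoid M] {n : ℕ} (f : Fin n → M) :
    ∑ k : Fin n, ∑ l ∈ Iic k, f l = ∑ l : Fin n, (n - l : ℕ) • f l := by
  rw [sum_comm' (t' := univ) (s' := Ici) (by simp)]
  simp only [Finset.sum_const, Fin.card_Ici]

theorem Fin.sum_sum_Iic_sub {n : ℕ} (q : Fin n → ℝ) :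
    ∑ k : Fin n, ∑ l ∈ Iic k, (q k - q l) = ∑ k : Fin n, (2 * (k : ℝ) + 1 - n) * q k := by
  simp only [Finset.sum_sub_distrib, Finset.sum_const, Fin.card_Iic,
    Fin.sum_sum_Iic_eq_sum_nsmul, nsmul_eq_mul]
  rw [← Finset.sum_sub_distrib]
  refine sum_congr rfl fun k _ => ?_
  push_cast [Nat.cast_sub k.is_lt.le]
  ring

theorem Monotone.sum_sum_abs_sub {ι : Type*} [Fintype ι] [LinearOrder ι]
    [LocallyFiniteOrderBot ι] {q : ι → ℝ} (hq : Monotone q) :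
    ∑ k, ∑ l, |q k - q l| = 2 * ∑ k, ∑ l ∈ Iic k, (q k - q l) := by
  have habs : ∀ k l, |q k - q l| = 2 * (if l ∈ Iic k then q k - q l else 0) - (q k - q l) := by
    intro k l
    rcases le_or_gt l k with hlk | hkl
    · rw [if_pos (mem_Iic.mpr hlk), abs_of_nonneg (sub_nonneg.mpr (hq hlk))]; ring
    · rw [if_neg (by simpa using hkl), abs_of_nonpos (sub_nonpos.mpr (hq hkl.le))]; ring
  have hskew : ∑ k, ∑ l, (q k - q l) = 0 := by
    simp only [sum_sub_distrib]
    rw [sum_comm, sub_self]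
  calc ∑ k, ∑ l, |q k - q l|
      = ∑ k, ∑ l, (2 * (if l ∈ Iic k then q k - q l else 0) - (q k - q l)) := by
        simp only [habs]
    _ = 2 * ∑ k, ∑ l ∈ Iic k, (q k - q l) - ∑ k, ∑ l, (q k - q l) := by
        rw [mul_sum, ← sum_sub_distrib]
        refine sum_congr rfl fun k _ => ?_
        rw [sum_sub_distrib, ← mul_sum, sum_ite_mem, univ_inter]
    _ = 2 * ∑ k, ∑ l ∈ Iic k, (q k - q l) := by rw [hskew, sub_zero]

theorem gini_comp_equiv {m n : Type*} [Fintype m] [Fintype n] (e : m ≃ n) (p : n → ℝ) :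
    gini (p ∘ e) = gini p := by
  rw [gini, gini, Fintype.card_congr e, ← e.sum_comp (fun r => ∑ s, |p r - p s|)]
  exact congrArg _ (sum_congr rfl fun r _ => e.sum_comp (fun s => |p (e r) - p s|))

theorem gini_of_monotone {n : ℕ} {q : Fin n → ℝ} (hq : Monotone q) :
    gini q = 1 / ((n : ℝ) + 1) * ∑ k : Fin n, (2 * (k : ℝ) + 1 - n) * q k := by
  rw [gini, hq.sum_sum_abs_sub, Fin.sum_sum_Iic_sub, Fintype.card_fin]
  field_simp

theorem gini_defs_agree_general (d : ℕ) (p : Fin d → ℝ)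
    (hsum : ∑ r, p r = 1) (π : Equiv.Perm (Fin d))
    (hmono : ∀ k l : Fin d, k ≤ l → p (π k) ≤ p (π l)) :
    1 - (2 / ((d : ℝ) + 1)) * ∑ k : Fin d, ((d : ℝ) - (k.val : ℝ)) * p (π k) = gini p := by
  have hsum' : ∑ k, p (π k) = 1 := (Equiv.sum_comp π p).trans hsum
  have hweights : ∑ k : Fin d, (2 * (k : ℝ) + 1 - d) * p (π k)
      = ((d : ℝ) + 1) * ∑ k, p (π k) - 2 * ∑ k : Fin d, ((d : ℝ) - k) * p (π k) := by
    rw [mul_sum, mul_sum, ← sum_sub_distrib]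
    exact sum_congr rfl fun k _ => by ring
  rw [← gini_comp_equiv π p, gini_of_monotone (q := p ∘ π) fun k l => hmono k l]
  simp only [Function.comp_apply, hweights, hsum']
  field_simp

theorem gini_defs_agree (d : ℕ) (hd : 1 ≤ d) (p : Fin d → ℝ) (hp : ∀ r, 0 ≤ p r)
    (hsum : ∑ r, p r = 1) (π : Equiv.Perm (Fin d))
    (hmono : ∀ k l : Fin d, k ≤ l → p (π k) ≤ p (π l)) :
    1 - (2 / ((d : ℝ) + 1)) * ∑ k : Fin d, ((d : ℝ) - (k.val : ℝ)) * p (π k) = gini p :=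
  gini_defs_agree_general d p hsum π hmono
end

section
/- For a density matrix ρ = Σ_i λ_i |e_i⟩⟨e_i| (spectral decomposition), the sum of position and momentum Gini indices satisfies G_{XP}(ρ) ≤ max_i G_{XP}(|e_i⟩⟨e_i|); hence the supremum of G_{XP} over all density matrices equals the supremum over pure states. -/
open Matrix BigOperators
open scoped ComplexOrder

/-! ### Auxiliary lemmas -/

section Aux

variable (d : ℕ) [NeZero d]

lemma omega_isPrimitiveRoot : IsPrimitiveRoot (omega d) d := by
  have := Complex.isPrimitiveRoot_exp d (NeZero.ne d)
  simpa [omega] using this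

lemma wpow_natCast (a : ℕ) : wpow d (a : ZMod d) = omega d ^ a := by
  have h : orderOf (omega d) = d := ((omega_isPrimitiveRoot d).eq_orderOf).symm
  unfold wpow
  rw [ZMod.val_natCast]
  conv_rhs => rw [← pow_mod_orderOf, h]

lemma zmod_cast_add (x y : ZMod d) : ((x.val + y.val : ℕ) : ZMod d) = x + y := by
  push_cast [ZMod.natCast_val, ZMod.cast_id]
  ring

lemma zmod_cast_mul (x y : ZMod d) : ((x.val * y.val : ℕ) : ZMod d) = x * y := by
  push_cast [ZMod.natCast_val, ZMod.cast_id]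
  ring

lemma wpow_add (x y : ZMod d) : wpow d (x + y) = wpow d x * wpow d y := by
  rw [← zmod_cast_add, wpow_natCast, pow_add]
  rfl

lemma wpow_zero : wpow d 0 = 1 := by
  simp [wpow, ZMod.val_zero]

lemma wpow_mul_wpow_neg (x : ZMod d) : wpow d x * wpow d (-x) = 1 := by
  rw [← wpow_add, add_neg_cancel, wpow_zero]

lemma conj_omega : (starRingEnd ℂ) (omega d) = (omega d)⁻¹ := by
  unfold omega
  rw [← Complex.exp_conj, ← Complex.exp_neg]
  congr 1
  rw [div_eq_mul_inv]
  simp only [_root_.map_mul, map_inv₀, Complex.conj_I, Complex.conj_ofReal, map_ofNat,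
    Complex.conj_natCast]
  ring

lemma conj_wpow (x : ZMod d) : (starRingEnd ℂ) (wpow d x) = wpow d (-x) := by
  have h1 : (starRingEnd ℂ) (wpow d x) = (wpow d x)⁻¹ := by
    unfold wpow
    rw [map_pow, conj_omega, inv_pow]
  rw [h1]
  exact inv_eq_of_mul_eq_one_right (wpow_mul_wpow_neg d x)

lemma sum_wpow_mul (m : ZMod d) (hm : m ≠ 0) : ∑ k : ZMod d, wpow d (k * m) = 0 := by
  have hprim := omega_isPrimitiveRoot d
  set ζ : ℂ := omega d ^ m.val with hζ
  have hterm : ∀ k : ZMod d, wpow d (k * m) = ζ ^ k.val := by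
    intro k
    rw [← zmod_cast_mul, wpow_natCast, mul_comm, pow_mul]
  have hζd : ζ ^ d = 1 := by
    rw [hζ, ← pow_mul, mul_comm, pow_mul, hprim.pow_eq_one, one_pow]
  have hζne : ζ ≠ 1 := by
    intro h
    have hdvd := (hprim.pow_eq_one_iff_dvd m.val).mp h
    have hlt : m.val < d := ZMod.val_lt m
    have hne : m.val ≠ 0 := fun h0 => hm (by rwa [← ZMod.val_eq_zero])
    exact absurd (Nat.le_of_dvd (Nat.pos_of_ne_zero hne) hdvd) (not_le.mpr hlt)
  calc ∑ k : ZMod d, wpow d (k * m) = ∑ k : ZMod d, ζ ^ k.val :=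
        Finset.sum_congr rfl fun k _ => hterm k
    _ = ∑ i ∈ Finset.range d, ζ ^ i := by
        refine Finset.sum_nbij' (fun k => k.val) (fun i => (i : ZMod d)) ?_ ?_ ?_ ?_ ?_
        · intro a _; exact Finset.mem_range.mpr (ZMod.val_lt a)
        · intro a _; exact Finset.mem_univ _
        · intro a _; simp [ZMod.natCast_val, ZMod.cast_id]
        · intro a ha; exact ZMod.val_natCast_of_lt (Finset.mem_range.mp ha)
        · intro a _; rfl
    _ = 0 := by
        rw [geom_sum_eq hζne, hζd, sub_self, zero_div]

/-- `F` is unitary : `Fᴴ * F = 1`. -/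
lemma Fmat_conjTranspose_mul_self : (Fmat d)ᴴ * Fmat d = 1 := by
  ext r s
  have hd : (0 : ℝ) < d := by
    have := Nat.pos_of_ne_zero (NeZero.ne d); exact_mod_cast this
  simp only [Matrix.mul_apply, Matrix.conjTranspose_apply, Fmat, Matrix.of_apply,
    RCLike.star_def]
  have hsqrt : ((Real.sqrt d : ℂ)) * ((Real.sqrt d : ℂ)) = (d : ℂ) := by
    rw [← Complex.ofReal_mul, Real.mul_self_sqrt hd.le]
    norm_cast
  have hterm : ∀ k : ZMod d,
      (starRingEnd ℂ) (wpow d (k * r) / (Real.sqrt d : ℂ)) * (wpow d (k * s) / (Real.sqrt d : ℂ))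
        = wpow d (k * (s - r)) / (d : ℂ) := by
    intro k
    rw [map_div₀, conj_wpow, Complex.conj_ofReal, div_mul_div_comm, ← wpow_add, hsqrt]
    congr 2
    ring
  rw [Finset.sum_congr rfl fun k _ => hterm k, ← Finset.sum_div]
  by_cases h : r = s
  · subst h
    simp only [sub_self, mul_zero, wpow_zero, Matrix.one_apply_eq]
    rw [Finset.sum_const, Finset.card_univ, ZMod.card]
    have hdc : (d : ℂ) ≠ 0 := Nat.cast_ne_zero.mpr (NeZero.ne d)
    field_simp
    rw [nsmul_eq_mul, mul_one]
  · rw [sum_wpow_mul d (s - r) (sub_ne_zero.mpr (Ne.symm h)), zero_div,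
      Matrix.one_apply_ne h]

lemma Fmat_mul_conjTranspose_self : Fmat d * (Fmat d)ᴴ = 1 :=
  mul_eq_one_comm.mp (Fmat_conjTranspose_mul_self d)

/-! ### outer products -/

lemma outer_apply {n : Type*} [Fintype n] (v : n → ℂ) (a b : n) :
    outer v a b = v a * (starRingEnd ℂ) (v b) := by
  simp [outer, Matrix.vecMulVec_apply]

lemma outer_posSemidef {n : Type*} [Fintype n] [DecidableEq n] (v : n → ℂ) :
    (outer v).PosSemidef := by
  have h : outer v = Matrix.replicateCol (Fin 1) v * (Matrix.replicateCol (Fin 1) v)ᴴ := by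
    rw [Matrix.conjTranspose_replicateCol]
    exact Matrix.vecMulVec_eq (Fin 1) v (star v)
  rw [h]
  exact Matrix.posSemidef_self_mul_conjTranspose _

lemma outer_trace {n : Type*} [Fintype n] (v : n → ℂ) :
    (outer v).trace = ((∑ m, ‖v m‖ ^ 2 : ℝ) : ℂ) := by
  rw [Matrix.trace]
  push_cast
  refine Finset.sum_congr rfl fun m _ => ?_
  rw [Matrix.diag_apply, outer_apply, Complex.mul_conj]
  norm_cast
  rw [Complex.normSq_eq_norm_sq]

/-! ### gini bounds -/

lemma gini_nonneg {n : Type*} [Fintype n] (p : n → ℝ) : 0 ≤ gini p := by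
  unfold gini
  have h : (0:ℝ) < Fintype.card n + 1 := by positivity
  refine mul_nonneg (by positivity) ?_
  exact Finset.sum_nonneg fun r _ => Finset.sum_nonneg fun s _ => abs_nonneg _

lemma gini_le_one {n : Type*} [Fintype n] (p : n → ℝ) (hp : ∀ r, 0 ≤ p r)
    (hs : ∑ r, p r = 1) : gini p ≤ 1 := by
  unfold gini
  set c := (Fintype.card n : ℝ) with hc
  have hc0 : 0 ≤ c := by positivity
  have hbound : ∑ r, ∑ s, |p r - p s| ≤ 2 * c := by
    calc ∑ r, ∑ s, |p r - p s| ≤ ∑ r : n, ∑ s : n, (p r + p s) := by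
          refine Finset.sum_le_sum fun r _ => Finset.sum_le_sum fun s _ => ?_
          calc |p r - p s| ≤ |p r| + |p s| := abs_sub _ _
            _ = p r + p s := by rw [abs_of_nonneg (hp r), abs_of_nonneg (hp s)]
      _ = ∑ r : n, (c * p r + 1) := Finset.sum_congr rfl fun r _ => by
            rw [Finset.sum_add_distrib, Finset.sum_const, Finset.card_univ, hs, nsmul_eq_mul,
              hc]
      _ = 2 * c := by
            rw [Finset.sum_add_distrib, ← Finset.mul_sum, hs, Finset.sum_const,
              Finset.card_univ, nsmul_eq_mul, mul_one, hc]
            ring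
  calc (1 / (2 * (c + 1))) * ∑ r, ∑ s, |p r - p s| ≤ (1 / (2 * (c + 1))) * (2 * c) :=
        mul_le_mul_of_nonneg_left hbound (by positivity)
    _ ≤ 1 := by
        rw [div_mul_eq_mul_div, one_mul, div_le_one (by positivity)]
        linarith

lemma gini_sum_le {n ι : Type*} [Fintype n] [Fintype ι] (lam : ι → ℝ) (p : ι → n → ℝ)
    (hlam : ∀ i, 0 ≤ lam i) :
    gini (fun r => ∑ i, lam i * p i r) ≤ ∑ i, lam i * gini (p i) := by
  unfold gini
  have h1 : ∀ r s : n, |(∑ i, lam i * p i r) - ∑ i, lam i * p i s|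
      ≤ ∑ i, lam i * |p i r - p i s| := by
    intro r s
    rw [← Finset.sum_sub_distrib]
    calc |∑ i, (lam i * p i r - lam i * p i s)| ≤ ∑ i, |lam i * p i r - lam i * p i s| :=
          Finset.abs_sum_le_sum_abs _ _
      _ = ∑ i, lam i * |p i r - p i s| := by
          refine Finset.sum_congr rfl fun i _ => ?_
          rw [← mul_sub, abs_mul, abs_of_nonneg (hlam i)]
  set c := (1 / (2 * ((Fintype.card n : ℝ) + 1))) with hc
  have hc0 : 0 ≤ c := by positivity
  have hswap : (∑ r : n, ∑ s : n, ∑ i, lam i * |p i r - p i s|)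
      = ∑ i, lam i * ∑ r, ∑ s, |p i r - p i s| := by
    calc ∑ r : n, ∑ s : n, ∑ i, lam i * |p i r - p i s|
        = ∑ r : n, ∑ i, ∑ s : n, lam i * |p i r - p i s| :=
          Finset.sum_congr rfl fun r _ => Finset.sum_comm
      _ = ∑ i, ∑ r : n, ∑ s : n, lam i * |p i r - p i s| := Finset.sum_comm
      _ = ∑ i, lam i * ∑ r, ∑ s, |p i r - p i s| := by
          refine Finset.sum_congr rfl fun i _ => ?_
          simp_rw [← Finset.mul_sum]
  calc c * ∑ r, ∑ s, |(∑ i, lam i * p i r) - ∑ i, lam i * p i s|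
      ≤ c * ∑ r, ∑ s, ∑ i, lam i * |p i r - p i s| := by
        refine mul_le_mul_of_nonneg_left ?_ hc0
        exact Finset.sum_le_sum fun r _ => Finset.sum_le_sum fun s _ => h1 r s
    _ = ∑ i, lam i * (c * ∑ r, ∑ s, |p i r - p i s|) := by
        rw [hswap, Finset.mul_sum]
        exact Finset.sum_congr rfl fun i _ => by ring
    _ = ∑ i, lam i * gini (p i) := rfl

/-! ### linearity of the probability distributions -/

lemma probX_sum (lam : ZMod d → ℝ) (σ : ZMod d → Matrix (ZMod d) (ZMod d) ℂ) (r : ZMod d) :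
    probX d (∑ i, (lam i : ℂ) • σ i) r = ∑ i, lam i * probX d (σ i) r := by
  unfold probX
  rw [Matrix.sum_apply]
  simp only [Matrix.smul_apply, smul_eq_mul, Complex.re_sum]
  exact Finset.sum_congr rfl fun i _ => Complex.re_ofReal_mul _ _

lemma probP_sum (lam : ZMod d → ℝ) (σ : ZMod d → Matrix (ZMod d) (ZMod d) ℂ) (r : ZMod d) :
    probP d (∑ i, (lam i : ℂ) • σ i) r = ∑ i, lam i * probP d (σ i) r := by
  unfold probP
  have h : (Fmat d)ᴴ * (∑ i, (lam i : ℂ) • σ i) * Fmat d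
      = ∑ i, (lam i : ℂ) • ((Fmat d)ᴴ * σ i * Fmat d) := by
    rw [Matrix.mul_sum, Matrix.sum_mul]
    refine Finset.sum_congr rfl fun i _ => ?_
    rw [Matrix.mul_smul, Matrix.smul_mul]
  rw [h, Matrix.sum_apply]
  simp only [Matrix.smul_apply, smul_eq_mul, Complex.re_sum]
  exact Finset.sum_congr rfl fun i _ => Complex.re_ofReal_mul _ _

/-- Convexity: giniXP of a mixture is at most the max over the components. -/
lemma giniXP_mix_le (lam : ZMod d → ℝ) (σ : ZMod d → Matrix (ZMod d) (ZMod d) ℂ)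
    (hlam : ∀ i, 0 ≤ lam i) (hsum : ∑ i, lam i = 1) :
    giniXP d (∑ i, (lam i : ℂ) • σ i)
      ≤ Finset.univ.sup' Finset.univ_nonempty (fun i => giniXP d (σ i)) := by
  set M := Finset.univ.sup' Finset.univ_nonempty (fun i => giniXP d (σ i)) with hM
  have hle : ∀ i, giniXP d (σ i) ≤ M := fun i =>
    Finset.le_sup' (fun i => giniXP d (σ i)) (Finset.mem_univ i)
  have hX : giniX d (∑ i, (lam i : ℂ) • σ i) ≤ ∑ i, lam i * giniX d (σ i) := by
    unfold giniX
    have : probX d (∑ i, (lam i : ℂ) • σ i) = fun r => ∑ i, lam i * probX d (σ i) r :=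
      funext fun r => probX_sum d lam σ r
    rw [this]
    exact gini_sum_le lam (fun i => probX d (σ i)) hlam
  have hP : giniP d (∑ i, (lam i : ℂ) • σ i) ≤ ∑ i, lam i * giniP d (σ i) := by
    unfold giniP
    have : probP d (∑ i, (lam i : ℂ) • σ i) = fun r => ∑ i, lam i * probP d (σ i) r :=
      funext fun r => probP_sum d lam σ r
    rw [this]
    exact gini_sum_le lam (fun i => probP d (σ i)) hlam
  calc giniXP d (∑ i, (lam i : ℂ) • σ i)
      ≤ ∑ i, lam i * giniX d (σ i) + ∑ i, lam i * giniP d (σ i) := add_le_add hX hP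
    _ = ∑ i, lam i * giniXP d (σ i) := by
        rw [← Finset.sum_add_distrib]
        exact Finset.sum_congr rfl fun i _ => by unfold giniXP; ring
    _ ≤ ∑ i, lam i * M := Finset.sum_le_sum fun i _ =>
        mul_le_mul_of_nonneg_left (hle i) (hlam i)
    _ = M := by rw [← Finset.sum_mul, hsum, one_mul]

/-! ### uniform bound -/

lemma psd_diag_re_nonneg {σ : Matrix (ZMod d) (ZMod d) ℂ} (hσ : σ.PosSemidef) (r : ZMod d) :
    0 ≤ (σ r r).re := by
  have h := hσ.dotProduct_mulVec_nonneg (Pi.single r 1)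
  have h2 : dotProduct (star (Pi.single r 1)) (σ *ᵥ Pi.single r 1) = σ r r := by
    have h1 : σ *ᵥ Pi.single r 1 = fun i => σ i r := by
      funext i
      simp [Matrix.mulVec, Pi.single_apply, mul_ite, mul_one, mul_zero, Finset.sum_ite_eq']
    rw [h1]
    simp [dotProduct, Pi.single_apply, apply_ite (star : ℂ → ℂ), star_one, star_zero,
      ite_mul, one_mul, zero_mul, Finset.sum_ite_eq]
  rw [h2] at h
  exact (Complex.le_def.mp h).1

lemma giniXP_le_two {σ : Matrix (ZMod d) (ZMod d) ℂ} (hσ : σ.PosSemidef)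
    (htr : σ.trace = 1) : giniXP d σ ≤ 2 := by
  have hX : giniX d σ ≤ 1 := by
    refine gini_le_one _ (fun r => psd_diag_re_nonneg d hσ r) ?_
    have : (σ.trace).re = 1 := by rw [htr]; rfl
    rw [← this, Matrix.trace, Complex.re_sum]
    rfl
  have hP : giniP d σ ≤ 1 := by
    have hpsd : ((Fmat d)ᴴ * σ * Fmat d).PosSemidef := hσ.conjTranspose_mul_mul_same (Fmat d)
    refine gini_le_one _ (fun r => psd_diag_re_nonneg d hpsd r) ?_
    have htr2 : ((Fmat d)ᴴ * σ * Fmat d).trace = 1 := by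
      rw [Matrix.trace_mul_cycle, Fmat_mul_conjTranspose_self, Matrix.one_mul, htr]
    have : (((Fmat d)ᴴ * σ * Fmat d).trace).re = 1 := by rw [htr2]; rfl
    rw [← this, Matrix.trace, Complex.re_sum]
    rfl
  calc giniXP d σ = giniX d σ + giniP d σ := rfl
    _ ≤ 1 + 1 := add_le_add hX hP
    _ = 2 := by norm_num

/-! ### spectral decomposition -/

lemma spectral_decomp {σ : Matrix (ZMod d) (ZMod d) ℂ} (hσ : σ.PosSemidef)
    (htr : σ.trace = 1) :
    ∃ (lam : ZMod d → ℝ) (e : ZMod d → ZMod d → ℂ),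
      (∀ i, 0 ≤ lam i) ∧ (∑ i, lam i = 1) ∧
      (∀ i j, star (e i) ⬝ᵥ e j = if i = j then 1 else 0) ∧
      σ = ∑ i, (lam i : ℂ) • outer (e i) := by
  have hH : σ.IsHermitian := hσ.1
  set U : Matrix (ZMod d) (ZMod d) ℂ := (hH.eigenvectorUnitary : Matrix (ZMod d) (ZMod d) ℂ)
    with hU
  set lam : ZMod d → ℝ := hH.eigenvalues with hlamdef
  set e : ZMod d → ZMod d → ℂ := fun i k => U k i with he
  have hUU : Uᴴ * U = 1 := by
    have := hH.eigenvectorUnitary.2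
    rw [Matrix.mem_unitaryGroup_iff'] at this
    exact this
  have horth : ∀ i j, star (e i) ⬝ᵥ e j = if i = j then 1 else 0 := by
    intro i j
    have : (Uᴴ * U) i j = if i = j then 1 else 0 := by rw [hUU, Matrix.one_apply]
    rw [← this, Matrix.mul_apply]
    simp [dotProduct, Matrix.conjTranspose_apply, he, star]
  have hdecomp : σ = ∑ i, (lam i : ℂ) • outer (e i) := by
    have hspec := hH.spectral_theorem
    rw [hspec, Unitary.conjStarAlgAut_apply]
    ext a b
    rw [Matrix.sum_apply]
    simp only [Matrix.smul_apply, smul_eq_mul]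
    rw [Matrix.mul_apply]
    have hterm : ∀ k, (U * Matrix.diagonal ((RCLike.ofReal ∘ hH.eigenvalues : ZMod d → ℂ))) a k
        * (star U) k b = (lam k : ℂ) * (e k a * (starRingEnd ℂ) (e k b)) := by
      intro k
      simp only [Matrix.mul_apply, Matrix.diagonal_apply, Function.comp_apply, mul_ite, mul_zero,
        Finset.sum_ite_eq', Finset.mem_univ, if_true, Matrix.star_apply, RCLike.star_def,
        Complex.coe_algebraMap, he]
      ring
    rw [Finset.sum_congr rfl fun k _ => hterm k]
    exact Finset.sum_congr rfl fun k _ => by rw [outer_apply]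
  have hnonneg : ∀ i, 0 ≤ lam i := hσ.eigenvalues_nonneg
  have hnorm : ∀ i, ∑ m, ‖e i m‖ ^ 2 = (1:ℝ) := by
    intro i
    have h := horth i i
    rw [if_pos rfl] at h
    have h2 : star (e i) ⬝ᵥ e i = ((∑ m, ‖e i m‖ ^ 2 : ℝ) : ℂ) := by
      rw [dotProduct]
      push_cast
      refine Finset.sum_congr rfl fun m _ => ?_
      simp only [Pi.star_apply]
      rw [RCLike.star_def, mul_comm, Complex.mul_conj]
      norm_cast
      rw [Complex.normSq_eq_norm_sq]
    rw [h2] at h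
    exact_mod_cast h
  have hsum : ∑ i, lam i = 1 := by
    have h1 : σ.trace = ((∑ i, lam i : ℝ) : ℂ) := by
      rw [hdecomp, Matrix.trace_sum]
      push_cast
      refine Finset.sum_congr rfl fun i _ => ?_
      rw [Matrix.trace_smul, outer_trace, hnorm i]
      simp
    rw [htr] at h1
    exact_mod_cast h1.symm
  exact ⟨lam, e, hnonneg, hsum, horth, hdecomp⟩

end Aux

theorem giniXP_sup_over_pure (d : ℕ) [NeZero d]
    (lam : ZMod d → ℝ) (e : ZMod d → ZMod d → ℂ)
    (hlam : ∀ i, 0 ≤ lam i) (hsum : ∑ i, lam i = 1)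
    (horth : ∀ i j, star (e i) ⬝ᵥ e j = if i = j then 1 else 0)
    (ρ : Matrix (ZMod d) (ZMod d) ℂ)
    (hρ : ρ = ∑ i, (lam i : ℂ) • outer (e i)) :
    giniXP d ρ ≤ Finset.univ.sup' Finset.univ_nonempty (fun i => giniXP d (outer (e i))) ∧
    sSup {x | ∃ σ : Matrix (ZMod d) (ZMod d) ℂ, σ.PosSemidef ∧ σ.trace = 1 ∧ x = giniXP d σ}
      = sSup {x | ∃ v : ZMod d → ℂ, (∑ m, ‖v m‖ ^ 2 = 1) ∧ x = giniXP d (outer v)} := by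
  constructor
  · rw [hρ]
    exact giniXP_mix_le d lam (fun i => outer (e i)) hlam hsum
  · set D := {x | ∃ σ : Matrix (ZMod d) (ZMod d) ℂ, σ.PosSemidef ∧ σ.trace = 1 ∧ x = giniXP d σ}
      with hD
    set P := {x | ∃ v : ZMod d → ℂ, (∑ m, ‖v m‖ ^ 2 = 1) ∧ x = giniXP d (outer v)} with hP
    have hPD : P ⊆ D := by
      rintro x ⟨v, hv, rfl⟩
      exact ⟨outer v, outer_posSemidef v, by rw [outer_trace, hv]; norm_num, rfl⟩
    have hDbdd : ∀ x ∈ D, x ≤ 2 := by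
      rintro x ⟨σ, hpsd, htr, rfl⟩
      exact giniXP_le_two d hpsd htr
    have hPne : P.Nonempty := by
      refine ⟨giniXP d (outer (Pi.single 0 1)), Pi.single 0 1, ?_, rfl⟩
      simp [Pi.single_apply, apply_ite]
    have hDne : D.Nonempty := hPne.mono hPD
    refine le_antisymm ?_ (csSup_le_csSup ⟨2, hDbdd⟩ hPne hPD)
    refine csSup_le hDne ?_
    rintro x ⟨σ, hpsd, htr, rfl⟩
    obtain ⟨lam', e', hlam', hsum', horth', hdec'⟩ := spectral_decomp d hpsd htr
    have h1 : giniXP d σ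
        ≤ Finset.univ.sup' Finset.univ_nonempty (fun i => giniXP d (outer (e' i))) := by
      rw [hdec']
      exact giniXP_mix_le d lam' (fun i => outer (e' i)) hlam' hsum'
    obtain ⟨i0, _, hi0⟩ := Finset.exists_mem_eq_sup' Finset.univ_nonempty
      (fun i => giniXP d (outer (e' i)))
    have hnorm : ∑ m, ‖e' i0 m‖ ^ 2 = (1:ℝ) := by
      have h := horth' i0 i0
      rw [if_pos rfl] at h
      have h2 : star (e' i0) ⬝ᵥ e' i0 = ((∑ m, ‖e' i0 m‖ ^ 2 : ℝ) : ℂ) := by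
        rw [dotProduct]
        push_cast
        refine Finset.sum_congr rfl fun m _ => ?_
        simp only [Pi.star_apply]
        rw [RCLike.star_def, mul_comm, Complex.mul_conj]
        norm_cast
        rw [Complex.normSq_eq_norm_sq]
      rw [h2] at h
      exact_mod_cast h
    have hmem : giniXP d (outer (e' i0)) ∈ P := ⟨e' i0, hnorm, rfl⟩
    have hPbdd : BddAbove P := ⟨2, fun x hx => hDbdd x (hPD hx)⟩
    calc giniXP d σ ≤ _ := h1
      _ = giniXP d (outer (e' i0)) := hi0
      _ ≤ sSup P := le_csSup hPbdd hmem
end
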